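/- The bracket defined on a 4-dimensional vector space with basis e₁,e₂,e₃,e₄ by [e₁,e₄]=[e₂,e₃]=-e₁, [e₂,e₄]=-(1/2)e₂, [e₃,e₄]=-(1/2)e₃ (all other brackets of basis elements zero, extended antisymmetrically and bilinearly) satisfies the Jacobi identity, hence defines a Lie algebra Φ'. -/
import Mathlib


noncomputable section

/-- The bracket on `Fin 4 → K` with basis `e₁,…,e₄` (indexed `0,…,3`) defined by
`[e₁,e₄]=[e₂,e₃]=-e₁`, `[e₂,e₄]=-(1/2)e₂`, `[e₃,e₄]=-(1/2)e₃`, all other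
brackets of basis elements zero, extended antisymmetrically and bilinearly. -/
def brPhi' {K : Type*} [Field K] (x y : Fin 4 → K) : Fin 4 → K :=
  ![ -(x 0 * y 3 - x 3 * y 0) - (x 1 * y 2 - x 2 * y 1),
     -(1/2) * (x 1 * y 3 - x 3 * y 1),
     -(1/2) * (x 2 * y 3 - x 3 * y 2),
     0 ]

/-- The bracket of Φ′ satisfies the Jacobi identity (it is antisymmetric by
construction), hence defines a Lie algebra. -/
theorem phi'_jacobi {K : Type*} [Field K] (h2 : (2 : K) ≠ 0) :
    (∀ x y : Fin 4 → K, brPhi' x y = - brPhi' y x) ∧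
    (∀ x y z : Fin 4 → K,
      brPhi' (brPhi' x y) z + brPhi' (brPhi' y z) x + brPhi' (brPhi' z x) y = 0) := by
  constructor
  · intro x y
    funext i
    fin_cases i <;> simp [brPhi'] <;> ring
  · intro x y z
    funext i
    fin_cases i <;> simp [brPhi'] <;> field_simp <;> ring
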